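/- arXiv:2006.04783 — 4 statements merged into one kernel-verified Lean document; each statement's English description precedes it below -/
import Mathlib

section
/- (Iterating between double squares) Let x ∈ J(𝓕). If k ≥ 5 and T(𝓕^{2k²}(x)) ≥ F^{k²}(1), then T(𝓕^n(x)) ≥ F^k(1) for every integer n with 2(k−1)² ≤ n ≤ 2k². -/
open Topology Filter Set

/-- The model map `F(t) = e^t - 1`. -/
noncomputable def Fmap (t : ℝ) : ℝ := Real.exp t - 1

/-- The model `𝓕(t, s) = (F(t) - 2π|s₀|, σ(s))` where `σ` is the shift. -/
noncomputable def calF : ℝ × (ℕ → ℤ) → ℝ × (ℕ → ℤ) :=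
  fun x => (Fmap x.1 - 2 * Real.pi * |(x.2 0 : ℝ)|, fun n => x.2 (n + 1))

/-- The Julia set of the model map. -/
def JcalF : Set (ℝ × (ℕ → ℤ)) :=
  {x | ∀ n : ℕ, 0 ≤ (calF^[n] x).1}

lemma Fmap_strictMono : StrictMono Fmap := fun a b hab => by
  simpa [Fmap] using Real.exp_lt_exp.2 hab

lemma Fmap_mono : Monotone Fmap := Fmap_strictMono.monotone

lemma le_Fmap (t : ℝ) : t ≤ Fmap t := by
  have := Real.add_one_le_exp t
  simp only [Fmap]; linarith

lemma calF_fst_le (y : ℝ × (ℕ → ℤ)) : (calF y).1 ≤ Fmap y.1 := by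
  have h0 : 0 ≤ 2 * Real.pi * |((y.2 0 : ℤ) : ℝ)| := by positivity
  simp only [calF]; linarith

lemma iter_fst_le (y : ℝ × (ℕ → ℤ)) : ∀ m : ℕ, (calF^[m] y).1 ≤ Fmap^[m] y.1 := by
  intro m
  induction m with
  | zero => simp
  | succ m ih =>
    rw [Function.iterate_succ_apply', Function.iterate_succ_apply']
    exact le_trans (calF_fst_le _) (Fmap_mono ih)

lemma le_Fmap_iterate (j : ℕ) (t : ℝ) : t ≤ Fmap^[j] t := by
  induction j with
  | zero => simp
  | succ j ih =>
    rw [Function.iterate_succ_apply']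
    exact le_trans ih (le_Fmap _)

lemma Fmap_iterate_one_mono {a b : ℕ} (hab : a ≤ b) : Fmap^[a] 1 ≤ Fmap^[b] 1 := by
  have : b = a + (b - a) := by omega
  rw [this, Function.iterate_add_apply]
  exact (Fmap_mono.iterate a) (le_Fmap_iterate _ _)

/-- Iterating between double squares. -/
theorem stmt5 (x : ℝ × (ℕ → ℤ)) (hx : x ∈ JcalF) (k : ℕ) (hk : 5 ≤ k)
    (h : Fmap^[k ^ 2] 1 ≤ (calF^[2 * k ^ 2] x).1) :
    ∀ n : ℕ, 2 * (k - 1) ^ 2 ≤ n → n ≤ 2 * k ^ 2 →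
      Fmap^[k] 1 ≤ (calF^[n] x).1 := by
  intro n hn1 hn2
  set m : ℕ := 2 * k ^ 2 - n with hmdef
  have hsplit : 2 * k ^ 2 = m + n := by omega
  have key : (calF^[2 * k ^ 2] x).1 ≤ Fmap^[m] ((calF^[n] x).1) := by
    rw [hsplit, Function.iterate_add_apply]
    exact iter_fst_le _ m
  have harith : m + k ≤ k ^ 2 := by
    obtain ⟨j, rfl⟩ : ∃ j, k = j + 1 := ⟨k - 1, by omega⟩
    have e1 : (j + 1) ^ 2 = j * j + 2 * j + 1 := by ring
    have e2 : (j + 1 - 1) ^ 2 = j * j := by simp [pow_two]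
    have hjj : 4 * j ≤ j * j := Nat.mul_le_mul_right j (by omega)
    rw [e2] at hn1
    rw [e1] at hn2 hmdef ⊢
    obtain ⟨p, hp⟩ : ∃ p, j * j = p := ⟨_, rfl⟩
    rw [hp] at hn1 hn2 hmdef hjj ⊢
    omega
  have chain : Fmap^[m] (Fmap^[k] 1) ≤ Fmap^[m] ((calF^[n] x).1) :=
    calc Fmap^[m] (Fmap^[k] 1) = Fmap^[m + k] 1 := by rw [Function.iterate_add_apply]
      _ ≤ Fmap^[k ^ 2] 1 := Fmap_iterate_one_mono harith
      _ ≤ (calF^[2 * k ^ 2] x).1 := h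
      _ ≤ _ := key
  exact ((Fmap_strictMono.iterate m).le_iff_le).mp chain
end

section
/- (Logarithmic orbit) Let G(t) = ln(t + 1) for t ≥ 0, and let G^n denote the n-fold iterate of G. Then G^n(1) < 3/n for all integers n ≥ 1. -/
/-!
Writing `M t = 3t/(3+t)`, one has `ln(1+t) ≤ M t` on `[0, 3/2]` (compare `1 + t` with the
quadratic lower bound for `exp (M t)`), and the Möbius map `M` is monotone and sends `3/a` to
`3/(a+1)`. Starting from `1 = 3/3`, induction gives `G^n(1) ≤ 3/(n+2) < 3/n`.
-/

/-- `G(t) = ln(t + 1)`, the inverse of `F(t) = e^t - 1` on `[0, ∞)`. -/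
noncomputable def G (t : ℝ) : ℝ := Real.log (t + 1)

open Real

lemma log_add_one_le_three_mul_div {t : ℝ} (ht₀ : 0 ≤ t) (ht : t ≤ 3 / 2) :
    log (t + 1) ≤ 3 * t / (3 + t) := by
  set y := 3 * t / (3 + t) with hy
  have hy₀ : 0 ≤ y := by positivity
  have hty : t * (3 - y) = 3 * y := by rw [hy]; field_simp; ring
  -- `y ≤ 1` is exactly `t ≤ 3/2`, and it makes `t = 3y/(3-y) ≤ y + y²/2`
  have hy₁ : y ≤ 1 := by rw [hy, div_le_one (by linarith)]; linarith
  have hquad : t + 1 ≤ 1 + y + y ^ 2 / 2 := by nlinarith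
  rw [log_le_iff_le_exp (by linarith)]
  exact hquad.trans (quadratic_le_exp_of_nonneg hy₀)

lemma three_mul_div_three_add_le {t a : ℝ} (ht₀ : 0 ≤ t) (ha : 0 < a) (ht : t ≤ 3 / a) :
    3 * t / (3 + t) ≤ 3 / (a + 1) := by
  have hta : t * a ≤ 3 := (le_div_iff₀ ha).mp ht
  rw [div_le_div_iff₀ (by linarith) (by linarith)]
  nlinarith

lemma G_nonneg {t : ℝ} (ht : 0 ≤ t) : 0 ≤ G t :=
  log_nonneg (by linarith)

lemma iterate_G_one_mem_Icc (n : ℕ) : G^[n] 1 ∈ Set.Icc 0 (3 / ((n : ℝ) + 2)) := by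
  induction n with
  | zero => norm_num
  | succ n ih =>
    obtain ⟨h₀, h⟩ := ih
    have hn : (0 : ℝ) < n + 2 := by positivity
    have h₃₂ : G^[n] 1 ≤ 3 / 2 :=
      h.trans (div_le_div_of_nonneg_left (by norm_num) two_pos (by simp))
    rw [Function.iterate_succ_apply']
    refine ⟨G_nonneg h₀, ?_⟩
    calc G (G^[n] 1) ≤ 3 * G^[n] 1 / (3 + G^[n] 1) := log_add_one_le_three_mul_div h₀ h₃₂
      _ ≤ 3 / (n + 2 + 1) := three_mul_div_three_add_le h₀ hn h
      _ = 3 / ((n + 1 : ℕ) + 2) := by push_cast; ring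

/-- Logarithmic orbit: `G^n(1) < 3/n` for all `n ≥ 1`. -/
theorem stmt7 : ∀ n : ℕ, 1 ≤ n → G^[n] 1 < 3 / n := by
  intro n hn
  have hn' : (0 : ℝ) < n := by exact_mod_cast hn
  calc G^[n] 1 ≤ 3 / (n + 2) := (iterate_G_one_mem_Icc n).2
    _ < 3 / n := div_lt_div_of_pos_left (by norm_num) hn' (by linarith)
end

section
/- Let G(t) = ln(t + 1) for t ≥ 0, and let G^n denote the n-fold iterate of G. Then the series ∑_{k=1}^∞ G^{k²}(1) converges, and its sum is less than π²/2. -/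
lemma quartic_le_exp {t : ℝ} (ht : 0 ≤ t) :
    1 + t + t ^ 2 / 2 + t ^ 3 / 6 + t ^ 4 / 24 ≤ Real.exp t := by
  have h := Real.sum_le_exp_of_nonneg ht 5
  norm_num [Finset.sum_range_succ, Nat.factorial] at h
  linarith

lemma log_cubic {t : ℝ} (ht : 0 ≤ t) :
    Real.log (t + 1) ≤ t - t ^ 2 / 2 + t ^ 3 / 3 := by
  have h1 : Real.log ((t + 1) * Real.exp (-t)) ≤ (t + 1) * Real.exp (-t) - 1 :=
    Real.log_le_sub_one_of_pos (by positivity)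
  rw [Real.log_mul (by positivity) (Real.exp_ne_zero _), Real.log_exp] at h1
  have hq := quartic_le_exp ht
  have hR : (0 : ℝ) ≤ 1 - t ^ 2 / 2 + t ^ 3 / 3 := by
    nlinarith [mul_nonneg ht (sq_nonneg (t - 1)), sq_nonneg (t - 1)]
  have key : (t + 1) * Real.exp (-t) ≤ 1 - t ^ 2 / 2 + t ^ 3 / 3 := by
    have hle : t + 1 ≤ (1 - t ^ 2 / 2 + t ^ 3 / 3) * Real.exp t := by
      calc t + 1 ≤ (1 - t ^ 2 / 2 + t ^ 3 / 3) * (1 + t + t ^ 2 / 2 + t ^ 3 / 6 + t ^ 4 / 24) := by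
            nlinarith [pow_nonneg ht 4, pow_nonneg ht 5, pow_nonneg ht 6, pow_nonneg ht 7]
        _ ≤ _ := mul_le_mul_of_nonneg_left hq hR
    have heq : (t + 1) * Real.exp (-t) = (t + 1) / Real.exp t := by
      rw [Real.exp_neg]; ring
    rw [heq, div_le_iff₀ (Real.exp_pos t)]
    linarith
  linarith

lemma iter_nonneg (n : ℕ) : 0 ≤ G^[n] 1 := by
  induction n with
  | zero => norm_num
  | succ n ih =>
      rw [Function.iterate_succ_apply']
      exact Real.log_nonneg (by linarith)

lemma iter_step {n : ℕ} {b : ℝ} (hb : G^[n] 1 ≤ b) :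
    G^[n + 1] 1 ≤ b - b ^ 2 / 2 + b ^ 3 / 3 := by
  rw [Function.iterate_succ_apply']
  have h0 := iter_nonneg n
  have h1 := log_cubic h0
  show Real.log (G^[n] 1 + 1) ≤ _
  have hmono : G^[n] 1 - (G^[n] 1) ^ 2 / 2 + (G^[n] 1) ^ 3 / 3 ≤ b - b ^ 2 / 2 + b ^ 3 / 3 := by
    nlinarith [sq_nonneg (G^[n] 1 + b - 2), sq_nonneg (G^[n] 1 - b), sq_nonneg (G^[n] 1 + b),
      mul_nonneg h0 (h0.trans hb)]
  linarith

lemma iter_one : G^[1] 1 ≤ 0.6931471808 := by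
  rw [Function.iterate_one]
  show Real.log (1 + 1) ≤ _
  have h2 : (1 : ℝ) + 1 = 2 := by norm_num
  rw [h2]
  exact Real.log_two_lt_d9.le

lemma iter_three : G^[3] 1 ≤ 3 / 5 := by
  have h2 := iter_step iter_one
  have h2' : G^[2] 1 ≤ 0.564 := by norm_num at h2 ⊢; linarith
  have h3 := iter_step h2'
  norm_num at h3 ⊢
  linarith

lemma iter_bound : ∀ n : ℕ, 1 ≤ n → G^[n] 1 ≤ 3 / (n + 2 : ℝ) := by
  have key : ∀ m : ℕ, G^[m + 3] 1 ≤ 3 / ((m : ℝ) + 5) := by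
    intro m
    induction m with
    | zero => simpa using iter_three
    | succ m ih =>
        have hm : (0 : ℝ) ≤ (m : ℝ) := Nat.cast_nonneg m
        set x : ℝ := (m : ℝ) + 5 with hxdef
        have hx5 : (5 : ℝ) ≤ x := by rw [hxdef]; linarith
        have hx0 : (0 : ℝ) < x := by linarith
        have step := iter_step ih
        have goal_eq : ((m + 1 : ℕ) : ℝ) + 5 = x + 1 := by push_cast; ring
        have idx_eq : (m + 1) + 3 = (m + 3) + 1 := by ring
        rw [idx_eq, goal_eq]
        refine step.trans ?_
        have e : 3 / x - (3 / x) ^ 2 / 2 + (3 / x) ^ 3 / 3 = (3 * x ^ 2 - 9 * x / 2 + 9) / x ^ 3 := by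
          field_simp
          ring
        rw [e, div_le_div_iff₀ (by positivity) (by positivity)]
        nlinarith
  intro n hn
  match n, hn with
  | 1, _ =>
      refine iter_one.trans ?_
      norm_num
  | 2, _ =>
      have h2 := iter_step iter_one
      norm_num at h2 ⊢
      linarith
  | (m + 3), _ =>
      have h := key m
      have : ((m + 3 : ℕ) : ℝ) + 2 = (m : ℝ) + 5 := by push_cast; ring
      rw [this]
      exact h

/-- The series `∑_{k=1}^∞ G^{k²}(1)` converges, with sum less than `π²/2`. -/
theorem stmt8 :
    Summable (fun k : ℕ => G^[(k + 1) ^ 2] 1) ∧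
      (∑' k : ℕ, G^[(k + 1) ^ 2] 1) < Real.pi ^ 2 / 2 := by
  have hterm : ∀ k : ℕ, G^[(k + 1) ^ 2] 1 ≤ 3 / ((k : ℝ) + 1) ^ 2 := by
    intro k
    have h1 : 1 ≤ (k + 1) ^ 2 := Nat.one_le_pow _ _ (by omega)
    have h2 := iter_bound ((k + 1) ^ 2) h1
    refine h2.trans ?_
    have hle : ((k : ℝ) + 1) ^ 2 ≤ (((k + 1) ^ 2 : ℕ) : ℝ) + 2 := by push_cast; nlinarith
    exact div_le_div_of_nonneg_left (by norm_num) (by positivity) hle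
  have h0 : ∀ k : ℕ, 0 ≤ G^[(k + 1) ^ 2] 1 := fun k => iter_nonneg _
  have hz := hasSum_zeta_two
  have hs : Summable (fun n : ℕ => (1 : ℝ) / (n : ℝ) ^ 2) := hz.summable
  have hs1 : Summable (fun k : ℕ => (1 : ℝ) / ((k : ℝ) + 1) ^ 2) := by
    have := (summable_nat_add_iff 1).mpr hs
    simpa using this
  have hg : Summable (fun k : ℕ => 3 / ((k : ℝ) + 1) ^ 2) := by
    simpa [div_eq_mul_inv, mul_comm, mul_assoc] using hs1.mul_left 3
  have hsummable : Summable (fun k : ℕ => G^[(k + 1) ^ 2] 1) :=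
    Summable.of_nonneg_of_le h0 hterm hg
  refine ⟨hsummable, ?_⟩
  have htsum1 : (∑' k : ℕ, (1 : ℝ) / ((k : ℝ) + 1) ^ 2) = Real.pi ^ 2 / 6 := by
    have h := Summable.tsum_eq_zero_add hs
    rw [hz.tsum_eq] at h
    simp at h
    simpa using h.symm
  have htsumg : (∑' k : ℕ, 3 / ((k : ℝ) + 1) ^ 2) = Real.pi ^ 2 / 2 := by
    have : (fun k : ℕ => 3 / ((k : ℝ) + 1) ^ 2) = fun k : ℕ => 3 * ((1 : ℝ) / ((k : ℝ) + 1) ^ 2) := by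
      funext k; ring
    rw [this, tsum_mul_left, htsum1]
    ring
  have hstrict : G^[(0 + 1) ^ 2] 1 < 3 / (((0 : ℕ) : ℝ) + 1) ^ 2 := by
    norm_num
    calc G^[1] 1 ≤ 0.6931471808 := iter_one
      _ < 3 := by norm_num
  calc (∑' k : ℕ, G^[(k + 1) ^ 2] 1) < ∑' k : ℕ, 3 / ((k : ℝ) + 1) ^ 2 :=
        Summable.tsum_lt_tsum_of_nonneg h0 hterm hstrict hg
    _ = Real.pi ^ 2 / 2 := htsumg
end

section
/- Let B = ⋃_{y∈Y} [t_y, ∞) × {y} be a brush, i.e. Y ⊆ ℝ \ ℚ, t_y ∈ ℝ for each y ∈ Y, and B is closed in ℝ², and let E = {(t_y, y) : y ∈ Y} be its set of endpoints. Then every point of E has a neighborhood basis (in the subspace topology of E) consisting of C-sets of E of the form E ∩ ((−∞, t] × W), where t ∈ ℝ and W is a clopen subset of Y; in particular each such set E ∩ ((−∞, t] × W) with W clopen in Y is a C-set in E. -/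
open Topology Filter Set

/-- A C-set in a topological space is an intersection of clopen subsets. -/
def IsCSet {X : Type*} [TopologicalSpace X] (C : Set X) : Prop :=
  ∃ 𝒮 : Set (Set X), (∀ s ∈ 𝒮, IsClopen s) ∧ C = ⋂₀ 𝒮

theorem stmt14 (Y : Set ℝ) (hY : ∀ y ∈ Y, Irrational y) (t : Y → ℝ)
    (B : Set (ℝ × ℝ)) (hBdef : B = ⋃ y : Y, Set.Ici (t y) ×ˢ ({(y : ℝ)} : Set ℝ))
    (hB : IsClosed B)
    (E : Set (ℝ × ℝ)) (hE : E = Set.range fun y : Y => ((t y, (y : ℝ)) : ℝ × ℝ)) :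
    -- each set `E ∩ ((-∞, τ] × W)` with `W` clopen in `Y` is a C-set in `E`
    (∀ (τ : ℝ) (W : Set ℝ), W ⊆ Y →
        IsClopen ((fun y : ↥Y => (y : ℝ)) ⁻¹' W) →
        IsCSet ((fun e : ↥E => (e : ℝ × ℝ)) ⁻¹' (Set.Iic τ ×ˢ W))) ∧
    -- and these sets form a neighborhood basis at every point of `E`
    (∀ e : ↥E, (𝓝 e).HasBasis
        (fun τW : ℝ × Set ℝ => τW.2 ⊆ Y ∧
          IsClopen ((fun y : ↥Y => (y : ℝ)) ⁻¹' τW.2) ∧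
          (fun x : ↥E => (x : ℝ × ℝ)) ⁻¹' (Set.Iic τW.1 ×ˢ τW.2) ∈ 𝓝 e)
        (fun τW => (fun x : ↥E => (x : ℝ × ℝ)) ⁻¹' (Set.Iic τW.1 ×ˢ τW.2))) := by
  -- membership criterion for B
  have hmemB : ∀ (x z : ℝ) (hz : z ∈ Y), ((x, z) ∈ B ↔ t ⟨z, hz⟩ ≤ x) := by
    intro x z hz
    rw [hBdef]
    simp only [Set.mem_iUnion, Set.mem_prod, Set.mem_Ici, Set.mem_singleton_iff]
    constructor
    · rintro ⟨y, h1, h2⟩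
      have hy : (⟨z, hz⟩ : Y) = y := Subtype.ext h2
      rw [hy]; exact h1
    · exact fun h => ⟨⟨z, hz⟩, h, rfl⟩
  -- endpoints
  have hEpt : ∀ p : ℝ × ℝ, p ∈ E → ∃ hz : p.2 ∈ Y, t ⟨p.2, hz⟩ = p.1 := by
    intro p hp
    rw [hE] at hp
    obtain ⟨y, hy⟩ := hp
    simp only at hy
    subst hy
    exact ⟨y.2, congrArg t (Subtype.coe_eta y y.2)⟩
  -- the second coordinate of an endpoint is irrational
  have hirr : ∀ e : ↥E, Irrational ((e : ℝ × ℝ)).2 := by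
    intro e
    obtain ⟨hz, -⟩ := hEpt e.val e.2
    exact hY _ hz
  -- clopen vertical strips in E with rational endpoints
  have stripE : ∀ p r : ℚ,
      IsClopen ((fun e : ↥E => ((e : ℝ × ℝ)).2) ⁻¹' Set.Ioo (p : ℝ) r) := by
    intro p r
    have hcont : Continuous fun e : ↥E => ((e : ℝ × ℝ)).2 :=
      continuous_snd.comp continuous_subtype_val
    constructor
    · have heq : (fun e : ↥E => ((e : ℝ × ℝ)).2) ⁻¹' Set.Ioo (p : ℝ) r
          = (fun e : ↥E => ((e : ℝ × ℝ)).2) ⁻¹' Set.Icc (p : ℝ) r := by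
        ext e
        have h1 : ((e : ℝ × ℝ)).2 ≠ (p : ℝ) := (hirr e).ne_rat p
        have h2 : ((e : ℝ × ℝ)).2 ≠ (r : ℝ) := (hirr e).ne_rat r
        simp only [Set.mem_preimage, Set.mem_Ioo, Set.mem_Icc]
        constructor
        · rintro ⟨a, b⟩; exact ⟨a.le, b.le⟩
        · rintro ⟨a, b⟩; exact ⟨a.lt_of_ne (Ne.symm h1), b.lt_of_ne h2⟩
      rw [heq]
      exact isClosed_Icc.preimage hcont
    · exact isOpen_Ioo.preimage hcont
  -- clopen vertical strips in Y with rational endpoints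
  have stripY : ∀ p r : ℚ,
      IsClopen ((fun y : ↥Y => (y : ℝ)) ⁻¹' Set.Ioo (p : ℝ) r) := by
    intro p r
    have hcont : Continuous fun y : ↥Y => (y : ℝ) := continuous_subtype_val
    constructor
    · have heq : (fun y : ↥Y => (y : ℝ)) ⁻¹' Set.Ioo (p : ℝ) r
          = (fun y : ↥Y => (y : ℝ)) ⁻¹' Set.Icc (p : ℝ) r := by
        ext y
        have h1 : (y : ℝ) ≠ (p : ℝ) := (hY _ y.2).ne_rat p
        have h2 : (y : ℝ) ≠ (r : ℝ) := (hY _ y.2).ne_rat r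
        simp only [Set.mem_preimage, Set.mem_Ioo, Set.mem_Icc]
        constructor
        · rintro ⟨a, b⟩; exact ⟨a.le, b.le⟩
        · rintro ⟨a, b⟩; exact ⟨a.lt_of_ne (Ne.symm h1), b.lt_of_ne h2⟩
      rw [heq]
      exact isClosed_Icc.preimage hcont
    · exact isOpen_Ioo.preimage hcont
  -- clopen sets of Y give clopen sets of E
  have hclopenWE : ∀ W : Set ℝ, W ⊆ Y → IsClopen ((fun y : ↥Y => (y : ℝ)) ⁻¹' W) →
      IsClopen ((fun e : ↥E => ((e : ℝ × ℝ)).2) ⁻¹' W) := by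
    intro W hWY hW
    have hcont : Continuous fun e : ↥E => ((e : ℝ × ℝ)).2 :=
      continuous_snd.comp continuous_subtype_val
    obtain ⟨F, hF, hFW⟩ := isClosed_induced_iff.mp hW.1
    obtain ⟨O, hO, hOW⟩ := isOpen_induced_iff.mp hW.2
    constructor
    · have heq : (fun e : ↥E => ((e : ℝ × ℝ)).2) ⁻¹' W
          = (fun e : ↥E => ((e : ℝ × ℝ)).2) ⁻¹' F := by
        ext e
        obtain ⟨hz, -⟩ := hEpt e.val e.2
        have := Set.ext_iff.mp hFW (⟨((e : ℝ × ℝ)).2, hz⟩ : ↥Y)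
        simp only [Set.mem_preimage] at this ⊢
        exact (this).symm
      rw [heq]
      exact hF.preimage hcont
    · have heq : (fun e : ↥E => ((e : ℝ × ℝ)).2) ⁻¹' W
          = (fun e : ↥E => ((e : ℝ × ℝ)).2) ⁻¹' O := by
        ext e
        obtain ⟨hz, -⟩ := hEpt e.val e.2
        have := Set.ext_iff.mp hOW (⟨((e : ℝ × ℝ)).2, hz⟩ : ↥Y)
        simp only [Set.mem_preimage] at this ⊢
        exact (this).symm
      rw [heq]
      exact hO.preimage hcont
  constructor
  · -- Part 1: C-sets
    intro τ W hWY hW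
    set C : Set ↥E := (fun e : ↥E => (e : ℝ × ℝ)) ⁻¹' (Set.Iic τ ×ˢ W) with hC
    have hmemC : ∀ x : ↥E, x ∈ C ↔ ((x : ℝ × ℝ)).1 ≤ τ ∧ ((x : ℝ × ℝ)).2 ∈ W := by
      intro x
      simp [hC, Set.mem_preimage, Set.mem_prod]
    refine ⟨{G | IsClopen G ∧ C ⊆ G}, fun s hs => hs.1, ?_⟩
    apply Set.Subset.antisymm
    · intro x hx
      exact Set.mem_sInter.mpr fun G hG => hG.2 hx
    · intro x hx
      by_contra hxC
      have hx' := Set.mem_sInter.mp hx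
      obtain ⟨hz, htz⟩ := hEpt x.val x.2
      by_cases hzW : ((x : ℝ × ℝ)).2 ∈ W
      · -- then τ < x.1, separate in the first coordinate
        have hτ : τ < ((x : ℝ × ℝ)).1 := by
          by_contra h
          push_neg at h
          exact hxC ((hmemC x).mpr ⟨h, hzW⟩)
        obtain ⟨q, hq1, hq2⟩ := exists_rat_btwn hτ
        have hqB : ((q : ℝ), ((x : ℝ × ℝ)).2) ∉ B := by
          rw [hmemB _ _ hz, htz]
          exact not_le.mpr hq2
        obtain ⟨u, v, hu, hv, hqu, hzv, huv⟩ :=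
          isOpen_prod_iff.mp hB.isOpen_compl _ _ hqB
        obtain ⟨δ, hδ, hball⟩ := Metric.isOpen_iff.mp hv _ hzv
        rw [Real.ball_eq_Ioo] at hball
        obtain ⟨p, hp1, hp2⟩ :=
          exists_rat_btwn (show ((x : ℝ × ℝ)).2 - δ < ((x : ℝ × ℝ)).2 by linarith)
        obtain ⟨r, hr1, hr2⟩ :=
          exists_rat_btwn (show ((x : ℝ × ℝ)).2 < ((x : ℝ × ℝ)).2 + δ by linarith)
        set G : Set ↥E := ((fun e : ↥E => ((e : ℝ × ℝ)).2) ⁻¹' Set.Ioo (p : ℝ) r)ᶜ with hG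
        have hCG : C ⊆ G := by
          intro w hw
          obtain ⟨hwz, htw⟩ := hEpt w.val w.2
          intro hwin
          simp only [Set.mem_preimage, Set.mem_Ioo] at hwin
          have hwv : ((w : ℝ × ℝ)).2 ∈ v := by
            apply hball
            constructor
            · linarith [hwin.1]
            · linarith [hwin.2]
          have hnB : ((q : ℝ), ((w : ℝ × ℝ)).2) ∉ B := huv ⟨hqu, hwv⟩
          rw [hmemB _ _ hwz, htw] at hnB
          push_neg at hnB
          have hle : ((w : ℝ × ℝ)).1 ≤ τ := ((hmemC w).mp hw).1
          linarith
        have hxG := hx' G ⟨(stripE p r).compl, hCG⟩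
        apply hxG
        simp only [Set.mem_preimage, Set.mem_Ioo]
        exact ⟨hp2, hr1⟩
      · -- second coordinate not in W
        have hxG := hx' ((fun e : ↥E => ((e : ℝ × ℝ)).2) ⁻¹' W)
          ⟨hclopenWE W hWY hW, fun w hw => ((hmemC w).mp hw).2⟩
        exact hzW hxG
  · -- Part 2: neighborhood basis
    intro e
    rw [Filter.hasBasis_iff]
    intro U
    constructor
    · intro hU
      -- unfold the subspace neighborhood
      rw [nhds_induced, Filter.mem_comap] at hU
      obtain ⟨V, hV, hVU⟩ := hU
      obtain ⟨ε, hε, hballV⟩ := Metric.mem_nhds_iff.mp hV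
      obtain ⟨hz, htz⟩ := hEpt e.val e.2
      set x0 : ℝ := ((e : ℝ × ℝ)).1 with hx0
      set z0 : ℝ := ((e : ℝ × ℝ)).2 with hz0
      -- (x0 - ε/2, z0) is not in B
      have hnB : (x0 - ε / 2, z0) ∉ B := by
        rw [hmemB _ _ hz, htz]
        push_neg
        linarith
      obtain ⟨u, v, hu, hv, hqu, hzv, huv⟩ :=
        isOpen_prod_iff.mp hB.isOpen_compl _ _ hnB
      obtain ⟨δ, hδ, hballv⟩ := Metric.isOpen_iff.mp hv _ hzv
      rw [Real.ball_eq_Ioo] at hballv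
      set δ' : ℝ := min δ ε with hδ'
      have hδ'pos : 0 < δ' := lt_min hδ hε
      obtain ⟨p, hp1, hp2⟩ := exists_rat_btwn (show z0 - δ' < z0 by linarith)
      obtain ⟨r, hr1, hr2⟩ := exists_rat_btwn (show z0 < z0 + δ' by linarith)
      refine ⟨(x0 + ε / 2, Y ∩ Set.Ioo (p : ℝ) r), ⟨Set.inter_subset_left, ?_, ?_⟩, ?_⟩
      · -- clopen in Y
        have heq : (fun y : ↥Y => (y : ℝ)) ⁻¹' (Y ∩ Set.Ioo (p : ℝ) r)
            = (fun y : ↥Y => (y : ℝ)) ⁻¹' Set.Ioo (p : ℝ) r := by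
          ext y
          simp [y.2]
        rw [heq]
        exact stripY p r
      · -- neighborhood of e
        have hop : IsOpen ((fun x : ↥E => (x : ℝ × ℝ)) ⁻¹'
            (Set.Iio (x0 + ε / 2) ×ˢ Set.Ioo (p : ℝ) r)) :=
          (isOpen_Iio.prod isOpen_Ioo).preimage continuous_subtype_val
        have hme : e ∈ (fun x : ↥E => (x : ℝ × ℝ)) ⁻¹'
            (Set.Iio (x0 + ε / 2) ×ˢ Set.Ioo (p : ℝ) r) := by
          simp only [Set.mem_preimage, Set.mem_prod, Set.mem_Iio, Set.mem_Ioo]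
          exact ⟨by linarith, hp2, hr1⟩
        refine Filter.mem_of_superset (hop.mem_nhds hme) ?_
        intro w hw
        obtain ⟨hwz, htw⟩ := hEpt w.val w.2
        simp only [Set.mem_preimage, Set.mem_prod, Set.mem_Iio, Set.mem_Ioo] at hw ⊢
        exact ⟨hw.1.le, hwz, hw.2⟩
      · -- contained in U
        intro w hw
        obtain ⟨hwz, htw⟩ := hEpt w.val w.2
        simp only [Set.mem_preimage, Set.mem_prod, Set.mem_Iic, Set.mem_inter_iff,
          Set.mem_Ioo] at hw
        obtain ⟨hw1, hwY, hwp, hwr⟩ : _ ∧ _ ∧ _ ∧ _ := ⟨hw.1, hw.2.1, hw.2.2.1, hw.2.2.2⟩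
        -- second coordinate is close to z0
        have h2lo : z0 - δ' < ((w : ℝ × ℝ)).2 := lt_trans hp1 hwp
        have h2hi : ((w : ℝ × ℝ)).2 < z0 + δ' := lt_trans hwr hr2
        have hδ'δ : δ' ≤ δ := min_le_left _ _
        have hδ'ε : δ' ≤ ε := min_le_right _ _
        -- w.2 ∈ v, hence the first coordinate is > x0 - ε/2
        have hwv : ((w : ℝ × ℝ)).2 ∈ v := by
          apply hballv
          constructor <;> [linarith; linarith]
        have hnBw : (x0 - ε / 2, ((w : ℝ × ℝ)).2) ∉ B := huv ⟨hqu, hwv⟩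
        rw [hmemB _ _ hwz, htw] at hnBw
        push_neg at hnBw
        -- w is in the ε-ball around e.val
        apply hVU
        apply Set.mem_preimage.mpr
        apply hballV
        rw [Metric.mem_ball]
        have hd : dist ((w : ℝ × ℝ)) ((e : ℝ × ℝ))
            = max (dist ((w : ℝ × ℝ)).1 x0) (dist ((w : ℝ × ℝ)).2 z0) := by
          rw [Prod.dist_eq, hx0, hz0]
        rw [hd]
        apply max_lt
        · rw [Real.dist_eq, abs_lt]
          constructor <;> linarith
        · rw [Real.dist_eq, abs_lt]
          constructor <;> linarith
    · rintro ⟨τW, ⟨-, -, hmem⟩, hsub⟩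
      exact Filter.mem_of_superset hmem hsub
end
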